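/- arXiv:2308.06298 — 2 statements merged into one kernel-verified Lean document; each statement's English description precedes it below -/
import Mathlib

section
/- The policy iteration algorithm (starting from any stationary policy g_0 with F(g_0) = F_*, iterating policy evaluation via the restricted linear system on G_* and the strict-improvement step) terminates in a finite number N of iterations at a policy g_N satisfying p(B|i,g_N(i)) + Σ_{j∈G_*} p(j|i,g_N(i)) q_j^{g_N} = min_{a∈A*(i)} [p(B|i,a) + Σ_{j∈G_*} p(j|i,a) q_j^{g_N}] for all i ∈ G_*, and this g_N is optimal: q_i^{g_N} = q_i^* for all i ∈ Bᶜ. -/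
open Finset

variable {S A : Type*}

/-- `hitLe p B n i = P_i(τ_B ≤ n)`: the probability that the Markov chain with
transition kernel `p`, started at `i`, hits the set `B` within `n` steps. -/
noncomputable def hitLe [Fintype S] [DecidableEq S] (p : S → S → ℝ) (B : Finset S) :
    ℕ → S → ℝ
  | 0, i => if i ∈ B then 1 else 0
  | n + 1, i => if i ∈ B then 1 else ∑ j, p i j * hitLe p B n j

/-- `hitProb p B i = P_i(τ_B < ∞)`, the probability of ever hitting `B` from `i`. -/
noncomputable def hitProb [Fintype S] [DecidableEq S] (p : S → S → ℝ) (B : Finset S)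
    (i : S) : ℝ :=
  ⨆ n, hitLe p B n i

/-- `failLe p B π n h i = P^π(τ_B ≤ n)` for the controlled process with transition
law `p`, history-dependent randomized policy `π`, past history `h` and current state `i`. -/
noncomputable def failLe [Fintype S] [Fintype A] [DecidableEq S]
    (p : S → A → S → ℝ) (B : Finset S) (π : List (S × A) → S → A → ℝ) :
    ℕ → List (S × A) → S → ℝ
  | 0, _, i => if i ∈ B then 1 else 0
  | n + 1, h, i =>
      if i ∈ B then 1
      else ∑ a, π h i a * ∑ j, p i a j * failLe p B π n (h ++ [(i, a)]) j

/-- `failProb p B π i = P_i^π(τ_B < ∞)`, the failure probability under policy `π`. -/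
noncomputable def failProb [Fintype S] [Fintype A] [DecidableEq S]
    (p : S → A → S → ℝ) (B : Finset S) (π : List (S × A) → S → A → ℝ) (i : S) : ℝ :=
  ⨆ n, failLe p B π n [] i

/-- `π` is a randomized history-dependent policy for the action sets `Acts`. -/
def IsPolicy (Acts : S → Finset A) (π : List (S × A) → S → A → ℝ) : Prop :=
  ∀ h i, (∀ a, 0 ≤ π h i a) ∧ (∑ a ∈ Acts i, π h i a = 1) ∧ ∀ a ∉ Acts i, π h i a = 0

/-- `failStar Acts p B i = q_i^* = inf_π P_i^π(τ_B < ∞)`. -/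
noncomputable def failStar [Fintype S] [Fintype A] [DecidableEq S]
    (Acts : S → Finset A) (p : S → A → S → ℝ) (B : Finset S) (i : S) : ℝ :=
  sInf {x | ∃ π, IsPolicy Acts π ∧ x = failProb p B π i}

/-- `F ⊂ Bᶜ` is a `Bᶜ`-closed set of the stationary policy `g`:
`p(F | i, g(i)) = 1` for every `i ∈ F`. -/
def IsBcClosed [Fintype S] (p : S → A → S → ℝ) (B : Finset S) (g : S → A)
    (F : Finset S) : Prop :=
  (∀ i ∈ F, i ∉ B) ∧ ∀ i ∈ F, ∑ j ∈ F, p i (g i) j = 1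

/-- `Fabs p B g = F(g)`, the `Bᶜ`-absorbing set of `g`: the union of all
`Bᶜ`-closed sets of `g`. -/
def Fabs [Fintype S] (p : S → A → S → ℝ) (B : Finset S) (g : S → A) : Set S :=
  {i | ∃ F, IsBcClosed p B g F ∧ i ∈ F}

/-- `FStar Acts p B = F_* = ⋃_{g} F(g)`, the union over all stationary policies. -/
def FStar [Fintype S] (Acts : S → Finset A) (p : S → A → S → ℝ) (B : Finset S) : Set S :=
  {i | ∃ g : S → A, (∀ s, g s ∈ Acts s) ∧ i ∈ Fabs p B g}

open scoped Classical

/-- `GStar Acts p B = G_* = Bᶜ \ F_*`, as a finite set of states. -/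
noncomputable def GStar [Fintype S] (Acts : S → Finset A) (p : S → A → S → ℝ)
    (B : Finset S) : Finset S :=
  Finset.univ.filter fun i => i ∉ B ∧ i ∉ FStar Acts p B

/-- The restricted admissible action sets `A*(i)`: all of `A(i)` off `F_*`, and on `F_*`
only the actions that keep `F_*` closed (`p(F_*|i,a) = 1`). -/
noncomputable def AStar [Fintype S] (Acts : S → Finset A) (p : S → A → S → ℝ)
    (B : Finset S) (i : S) : Finset A :=
  if i ∈ FStar Acts p B then
    (Acts i).filter fun a =>
      ∑ j ∈ Finset.univ.filter (· ∈ FStar Acts p B), p i a j = 1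
  else Acts i

/-- The one-step value of action `a` at state `i` against the failure probabilities of `g`. -/
noncomputable def oneStep [Fintype S] [DecidableEq S]
    (Acts : S → Finset A) (p : S → A → S → ℝ) (B : Finset S) (g : S → A)
    (i : S) (a : A) : ℝ :=
  (∑ j ∈ B, p i a j)
    + ∑ j ∈ GStar Acts p B, p i a j * hitProb (fun i j => p i (g i) j) B j

/-- `A_g(i)`: the strictly improving actions at `i`. -/
noncomputable def ImpActs [Fintype S] [DecidableEq S]
    (Acts : S → Finset A) (p : S → A → S → ℝ) (B : Finset S) (g : S → A)
    (i : S) : Finset A :=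
  (AStar Acts p B i).filter fun a =>
    oneStep Acts p B g i a < hitProb (fun i j => p i (g i) j) B i

/-- One iteration of the policy improvement step of the policy iteration algorithm. -/
def ImproveStep [Fintype S] [DecidableEq S]
    (Acts : S → Finset A) (p : S → A → S → ℝ) (B : Finset S)
    (g gt : S → A) : Prop :=
  (∀ i, i ∉ GStar Acts p B → gt i = g i) ∧
  ∀ i ∈ GStar Acts p B,
    (ImpActs Acts p B g i = ∅ → gt i = g i) ∧
    (ImpActs Acts p B g i ≠ ∅ →
      gt i ∈ AStar Acts p B i ∧
        ∀ a ∈ AStar Acts p B i, oneStep Acts p B g i (gt i) ≤ oneStep Acts p B g i a)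


section Stationary

variable [Fintype S] [DecidableEq S] (P : S → S → ℝ) (B : Finset S)

lemma hitLe_nonneg (hP0 : ∀ i j, 0 ≤ P i j) : ∀ n i, 0 ≤ hitLe P B n i := by
  intro n
  induction n with
  | zero => intro i; simp only [hitLe]; split <;> norm_num
  | succ n ih =>
    intro i; simp only [hitLe]; split
    · norm_num
    · exact Finset.sum_nonneg fun j _ => mul_nonneg (hP0 i j) (ih j)

lemma hitLe_le_one (hP0 : ∀ i j, 0 ≤ P i j) (hP1 : ∀ i, ∑ j, P i j = 1) :
    ∀ n i, hitLe P B n i ≤ 1 := by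
  intro n
  induction n with
  | zero => intro i; simp only [hitLe]; split <;> norm_num
  | succ n ih =>
    intro i; simp only [hitLe]; split
    · norm_num
    · calc ∑ j, P i j * hitLe P B n j ≤ ∑ j, P i j * 1 :=
            Finset.sum_le_sum fun j _ => mul_le_mul_of_nonneg_left (ih j) (hP0 i j)
        _ = 1 := by simp [hP1 i]

lemma hitLe_mono (hP0 : ∀ i j, 0 ≤ P i j) : ∀ n i, hitLe P B n i ≤ hitLe P B (n + 1) i := by
  intro n
  induction n with
  | zero =>
    intro i; simp only [hitLe]; split
    · norm_num
    · exact Finset.sum_nonneg fun j _ => mul_nonneg (hP0 i j) (hitLe_nonneg P B hP0 0 j)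
  | succ n ih =>
    intro i; simp only [hitLe]; split
    · norm_num
    · exact Finset.sum_le_sum fun j _ => mul_le_mul_of_nonneg_left (ih j) (hP0 i j)

lemma hitLe_monotone (hP0 : ∀ i j, 0 ≤ P i j) (i : S) :
    Monotone fun n => hitLe P B n i :=
  monotone_nat_of_le_succ fun n => hitLe_mono P B hP0 n i

lemma hitLe_bddAbove (hP0 : ∀ i j, 0 ≤ P i j) (hP1 : ∀ i, ∑ j, P i j = 1) (i : S) :
    BddAbove (Set.range fun n => hitLe P B n i) := by
  refine ⟨1, ?_⟩; rintro x ⟨n, rfl⟩; exact hitLe_le_one P B hP0 hP1 n i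

lemma hitLe_le_hitProb (hP0 : ∀ i j, 0 ≤ P i j) (hP1 : ∀ i, ∑ j, P i j = 1) (n : ℕ) (i : S) :
    hitLe P B n i ≤ hitProb P B i :=
  le_ciSup (hitLe_bddAbove P B hP0 hP1 i) n

lemma hitProb_nonneg (hP0 : ∀ i j, 0 ≤ P i j) (hP1 : ∀ i, ∑ j, P i j = 1) (i : S) :
    0 ≤ hitProb P B i :=
  le_trans (hitLe_nonneg P B hP0 0 i) (hitLe_le_hitProb P B hP0 hP1 0 i)

lemma hitProb_le_one (hP0 : ∀ i j, 0 ≤ P i j) (hP1 : ∀ i, ∑ j, P i j = 1) (i : S) :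
    hitProb P B i ≤ 1 :=
  ciSup_le fun n => hitLe_le_one P B hP0 hP1 n i

lemma hitLe_mem (n : ℕ) {i : S} (hi : i ∈ B) : hitLe P B n i = 1 := by
  cases n <;> simp [hitLe, hi]

lemma hitProb_mem {i : S} (hi : i ∈ B) : hitProb P B i = 1 := by
  have : (fun n => hitLe P B n i) = fun _ => 1 := funext fun n => hitLe_mem P B n hi
  rw [hitProb, this, ciSup_const]

lemma hitProb_tendsto (hP0 : ∀ i j, 0 ≤ P i j) (hP1 : ∀ i, ∑ j, P i j = 1) (i : S) :
    Filter.Tendsto (fun n => hitLe P B n i) Filter.atTop (nhds (hitProb P B i)) :=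
  tendsto_atTop_ciSup (hitLe_monotone P B hP0 i) (hitLe_bddAbove P B hP0 hP1 i)

lemma hitProb_rec (hP0 : ∀ i j, 0 ≤ P i j) (hP1 : ∀ i, ∑ j, P i j = 1) {i : S} (hi : i ∉ B) :
    hitProb P B i = ∑ j, P i j * hitProb P B j := by
  have h1 : Filter.Tendsto (fun n => hitLe P B (n + 1) i) Filter.atTop
      (nhds (hitProb P B i)) :=
    (hitProb_tendsto P B hP0 hP1 i).comp (Filter.tendsto_add_atTop_nat 1)
  have h2 : Filter.Tendsto (fun n => hitLe P B (n + 1) i) Filter.atTop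
      (nhds (∑ j, P i j * hitProb P B j)) := by
    have : (fun n => hitLe P B (n + 1) i) = fun n => ∑ j, P i j * hitLe P B n j := by
      funext n; simp only [hitLe, if_neg hi]
    rw [this]
    exact tendsto_finset_sum _ fun j _ =>
      (hitProb_tendsto P B hP0 hP1 j).const_mul (P i j)
  exact tendsto_nhds_unique h1 h2

/-- Improvement lemma: a nonnegative supersolution dominates `hitProb`. -/
lemma hitProb_le_of_supersol (hP0 : ∀ i j, 0 ≤ P i j)
    (q : S → ℝ) (hq0 : ∀ i, 0 ≤ q i) (hqB : ∀ i ∈ B, (1:ℝ) ≤ q i)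
    (hqr : ∀ i ∉ B, ∑ j, P i j * q j ≤ q i) :
    ∀ i, hitProb P B i ≤ q i := by
  have key : ∀ n i, hitLe P B n i ≤ q i := by
    intro n
    induction n with
    | zero =>
      intro i; simp only [hitLe]; split
      · exact hqB i ‹_›
      · exact hq0 i
    | succ n ih =>
      intro i; simp only [hitLe]; split
      · exact hqB i ‹_›
      · exact le_trans (Finset.sum_le_sum fun j _ =>
          mul_le_mul_of_nonneg_left (ih j) (hP0 i j)) (hqr i ‹_›)
  exact fun i => ciSup_le fun n => key n i

lemma hitProb_eq_zero_of_closed (hP0 : ∀ i j, 0 ≤ P i j) (hP1 : ∀ i, ∑ j, P i j = 1)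
    (F : Finset S) (hFB : ∀ i ∈ F, i ∉ B) (hFc : ∀ i ∈ F, ∑ j ∈ F, P i j = 1) :
    ∀ i ∈ F, hitProb P B i = 0 := by
  have key : ∀ n, ∀ i ∈ F, hitLe P B n i = 0 := by
    intro n
    induction n with
    | zero => intro i hi; simp [hitLe, hFB i hi]
    | succ n ih =>
      intro i hi
      have hsplit : ∑ j, P i j * hitLe P B n j
          = ∑ j ∈ F, P i j * hitLe P B n j + ∑ j ∈ Fᶜ, P i j * hitLe P B n j :=
        (Finset.sum_add_sum_compl F _).symm
      have h1 : ∑ j ∈ F, P i j * hitLe P B n j = 0 :=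
        Finset.sum_eq_zero fun j hj => by rw [ih j hj, mul_zero]
      have h2 : ∑ j ∈ Fᶜ, P i j = 0 := by
        have := Finset.sum_add_sum_compl F (P i)
        rw [hFc i hi] at this
        linarith [hP1 i, this]
      have h3 : ∑ j ∈ Fᶜ, P i j * hitLe P B n j ≤ 0 := by
        calc ∑ j ∈ Fᶜ, P i j * hitLe P B n j ≤ ∑ j ∈ Fᶜ, P i j * 1 :=
              Finset.sum_le_sum fun j _ =>
                mul_le_mul_of_nonneg_left (hitLe_le_one P B hP0 hP1 n j) (hP0 i j)
          _ = 0 := by rw [← h2]; simp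
      have h4 : 0 ≤ ∑ j ∈ Fᶜ, P i j * hitLe P B n j :=
        Finset.sum_nonneg fun j _ => mul_nonneg (hP0 i j) (hitLe_nonneg P B hP0 n j)
      simp only [hitLe, if_neg (hFB i hi), hsplit, h1, le_antisymm h3 h4, add_zero, zero_add]
  intro i hi
  have : (fun n => hitLe P B n i) = fun _ => (0:ℝ) := funext fun n => key n i hi
  rw [hitProb, this, ciSup_const]

end Stationary

set_option linter.unusedSectionVars false
section Controlled

variable [Fintype S] [Fintype A] [DecidableEq S]
  (Acts : S → Finset A) (p : S → A → S → ℝ) (B : Finset S)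

variable {π : List (S × A) → S → A → ℝ}

lemma failLe_nonneg (hp0 : ∀ i, ∀ a ∈ Acts i, ∀ j, 0 ≤ p i a j)
    (hπ : IsPolicy Acts π) : ∀ n h i, 0 ≤ failLe p B π n h i := by
  intro n
  induction n with
  | zero => intro h i; simp only [failLe]; split <;> norm_num
  | succ n ih =>
    intro h i; simp only [failLe]; split
    · norm_num
    · refine Finset.sum_nonneg fun a _ => ?_
      by_cases ha : a ∈ Acts i
      · exact mul_nonneg ((hπ h i).1 a) (Finset.sum_nonneg fun j _ =>
          mul_nonneg (hp0 i a ha j) (ih _ j))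
      · rw [(hπ h i).2.2 a ha, zero_mul]

lemma sum_pi_one (hπ : IsPolicy Acts π)
    (h : List (S × A)) (i : S) (f : A → ℝ) :
    ∑ a, π h i a * f a = ∑ a ∈ Acts i, π h i a * f a := by
  rw [← Finset.sum_subset (Finset.subset_univ (Acts i))]
  intro a _ ha; rw [(hπ h i).2.2 a ha, zero_mul]

lemma failLe_le_one (hp0 : ∀ i, ∀ a ∈ Acts i, ∀ j, 0 ≤ p i a j)
    (hp1 : ∀ i, ∀ a ∈ Acts i, ∑ j, p i a j = 1)
    (hπ : IsPolicy Acts π) : ∀ n h i, failLe p B π n h i ≤ 1 := by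
  intro n
  induction n with
  | zero => intro h i; simp only [failLe]; split <;> norm_num
  | succ n ih =>
    intro h i; simp only [failLe]; split
    · norm_num
    · rw [sum_pi_one Acts hπ]
      calc ∑ a ∈ Acts i, π h i a * ∑ j, p i a j * failLe p B π n (h ++ [(i, a)]) j
          ≤ ∑ a ∈ Acts i, π h i a * 1 := by
            refine Finset.sum_le_sum fun a ha => mul_le_mul_of_nonneg_left ?_ ((hπ h i).1 a)
            calc ∑ j, p i a j * failLe p B π n (h ++ [(i, a)]) j
                ≤ ∑ j, p i a j * 1 := Finset.sum_le_sum fun j _ =>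
                  mul_le_mul_of_nonneg_left (ih _ j) (hp0 i a ha j)
              _ = 1 := by simp [hp1 i a ha]
        _ = 1 := by simp [(hπ h i).2.1]

lemma failLe_mono (hp0 : ∀ i, ∀ a ∈ Acts i, ∀ j, 0 ≤ p i a j)
    (hπ : IsPolicy Acts π) :
    ∀ n h i, failLe p B π n h i ≤ failLe p B π (n + 1) h i := by
  intro n
  induction n with
  | zero =>
    intro h i; simp only [failLe]; split
    · norm_num
    · refine Finset.sum_nonneg fun a _ => ?_
      by_cases ha : a ∈ Acts i
      · exact mul_nonneg ((hπ h i).1 a) (Finset.sum_nonneg fun j _ =>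
          mul_nonneg (hp0 i a ha j) (failLe_nonneg Acts p B hp0 hπ 0 (h ++ [(i, a)]) j))
      · rw [(hπ h i).2.2 a ha, zero_mul]
  | succ n ih =>
    intro h i; simp only [failLe]; split
    · norm_num
    · refine Finset.sum_le_sum fun a _ => ?_
      by_cases ha : a ∈ Acts i
      · refine mul_le_mul_of_nonneg_left ?_ ((hπ h i).1 a)
        exact Finset.sum_le_sum fun j _ =>
          mul_le_mul_of_nonneg_left (ih (h ++ [(i, a)]) j) (hp0 i a ha j)
      · rw [(hπ h i).2.2 a ha]; simp

lemma failLe_mem (n : ℕ) (h : List (S × A)) {i : S} (hi : i ∈ B) :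
    failLe p B π n h i = 1 := by
  cases n <;> simp [failLe, hi]

lemma failLe_bddAbove (hp0 : ∀ i, ∀ a ∈ Acts i, ∀ j, 0 ≤ p i a j)
    (hp1 : ∀ i, ∀ a ∈ Acts i, ∑ j, p i a j = 1) (hπ : IsPolicy Acts π) (i : S) :
    BddAbove (Set.range fun n => failLe p B π n [] i) := by
  refine ⟨1, ?_⟩; rintro x ⟨n, rfl⟩; exact failLe_le_one Acts p B hp0 hp1 hπ n [] i

lemma failLe_le_failProb (hp0 : ∀ i, ∀ a ∈ Acts i, ∀ j, 0 ≤ p i a j)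
    (hp1 : ∀ i, ∀ a ∈ Acts i, ∑ j, p i a j = 1) (hπ : IsPolicy Acts π) (n : ℕ) (i : S) :
    failLe p B π n [] i ≤ failProb p B π i :=
  le_ciSup (failLe_bddAbove Acts p B hp0 hp1 hπ i) n

lemma failProb_nonneg (hp0 : ∀ i, ∀ a ∈ Acts i, ∀ j, 0 ≤ p i a j)
    (hp1 : ∀ i, ∀ a ∈ Acts i, ∑ j, p i a j = 1) (hπ : IsPolicy Acts π) (i : S) :
    0 ≤ failProb p B π i :=
  le_trans (failLe_nonneg Acts p B hp0 hπ 0 [] i)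
    (failLe_le_failProb Acts p B hp0 hp1 hπ 0 i)

/-- The deterministic stationary policy induced by `g`. -/
noncomputable def detPol (g : S → A) : List (S × A) → S → A → ℝ :=
  fun _ i a => if a = g i then 1 else 0

lemma detPol_isPolicy {g : S → A} (hg : ∀ i, g i ∈ Acts i) :
    IsPolicy Acts (detPol g) := by
  intro h i
  refine ⟨fun a => ?_, ?_, fun a ha => ?_⟩
  · unfold detPol; split <;> norm_num
  · unfold detPol
    rw [Finset.sum_ite_eq' (Acts i) (g i) (fun _ => (1:ℝ))]
    simp [hg i]
  · unfold detPol
    rw [if_neg]; rintro rfl; exact ha (hg i)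

lemma failLe_detPol (g : S → A) :
    ∀ n h i, failLe p B (detPol g) n h i = hitLe (fun i j => p i (g i) j) B n i := by
  intro n
  induction n with
  | zero => intro h i; simp [failLe, hitLe]
  | succ n ih =>
    intro h i
    simp only [failLe, hitLe]
    split
    · rfl
    · have : ∀ a : A, detPol g h i a * (∑ j, p i a j * failLe p B (detPol g) n (h ++ [(i, a)]) j)
          = if a = g i then ∑ j, p i a j * failLe p B (detPol g) n (h ++ [(i, a)]) j else 0 := by
        intro a; unfold detPol; split <;> simp
      rw [Finset.sum_congr rfl fun a _ => this a, Finset.sum_ite_eq' Finset.univ (g i)]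
      simp only [Finset.mem_univ, if_true]
      exact Finset.sum_congr rfl fun j _ => by rw [ih (h ++ [(i, g i)]) j]

lemma failProb_detPol (g : S → A) (i : S) :
    failProb p B (detPol g) i = hitProb (fun i j => p i (g i) j) B i := by
  unfold failProb hitProb
  exact congrArg _ (funext fun n => failLe_detPol p B g n [] i)

end Controlled

section Structural

variable [Fintype S] [Fintype A] [DecidableEq S]
  (Acts : S → Finset A) (p : S → A → S → ℝ) (B : Finset S)

lemma FStar_notMem_B {i : S} (hi : i ∈ FStar Acts p B) : i ∉ B := by
  obtain ⟨g, -, F, hF, hiF⟩ := hi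
  exact hF.1 i hiF

lemma mem_GStar {i : S} : i ∈ GStar Acts p B ↔ i ∉ B ∧ i ∉ FStar Acts p B := by
  simp [GStar]

lemma AStar_eq_Acts {i : S} (hi : i ∈ GStar Acts p B) : AStar Acts p B i = Acts i := by
  rw [AStar, if_neg ((mem_GStar Acts p B).1 hi).2]

lemma AStar_subset_Acts (i : S) : AStar Acts p B i ⊆ Acts i := by
  rw [AStar]; split
  · exact Finset.filter_subset _ _
  · exact subset_rfl

lemma sum_decomp (f : S → ℝ) :
    ∑ j, f j = (∑ j ∈ B, f j) + (∑ j ∈ GStar Acts p B, f j)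
      + ∑ j ∈ Finset.univ.filter (· ∈ FStar Acts p B), f j := by
  have h1 : ∑ j, f j = (∑ j ∈ B, f j) + ∑ j ∈ Bᶜ, f j :=
    (Finset.sum_add_sum_compl B f).symm
  have h2 : ∑ j ∈ Bᶜ, f j
      = (∑ j ∈ Bᶜ.filter (· ∉ FStar Acts p B), f j)
        + ∑ j ∈ Bᶜ.filter (¬ · ∉ FStar Acts p B), f j :=
    (Finset.sum_filter_add_sum_filter_not Bᶜ _ f).symm
  have e1 : Bᶜ.filter (· ∉ FStar Acts p B) = GStar Acts p B := by
    ext j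
    simp only [Finset.mem_filter, Finset.mem_compl, GStar, Finset.mem_univ, true_and]
  have e2 : Bᶜ.filter (¬ · ∉ FStar Acts p B)
      = Finset.univ.filter (· ∈ FStar Acts p B) := by
    ext j
    simp only [Finset.mem_filter, Finset.mem_compl, Finset.mem_univ, true_and, not_not]
    exact ⟨fun h => h.2, fun h => ⟨FStar_notMem_B Acts p B h, h⟩⟩
  rw [h1, h2, e1, e2, add_assoc]

lemma closed_subset_FStar {g : S → A} (hg : ∀ s, g s ∈ Acts s) {F : Finset S}
    (hF : IsBcClosed p B g F) : ∀ i ∈ F, i ∈ FStar Acts p B :=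
  fun i hi => ⟨g, hg, F, hF, hi⟩

/-- If `g` is admissible with `Fabs g = FStar` then `F_*` (as a finset) is closed for `g`. -/
lemma FS_closed {g : S → A} (hg : ∀ s, g s ∈ Acts s)
    (hp0 : ∀ i, ∀ a ∈ Acts i, ∀ j, 0 ≤ p i a j)
    (hp1 : ∀ i, ∀ a ∈ Acts i, ∑ j, p i a j = 1)
    (hFg : Fabs p B g = FStar Acts p B) :
    IsBcClosed p B g (Finset.univ.filter (· ∈ FStar Acts p B)) := by
  constructor
  · intro i hi
    exact FStar_notMem_B Acts p B (Finset.mem_filter.1 hi).2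
  · intro i hi
    have hiF : i ∈ Fabs p B g := by rw [hFg]; exact (Finset.mem_filter.1 hi).2
    obtain ⟨F, hF, hiF'⟩ := hiF
    have hsub : F ⊆ Finset.univ.filter (· ∈ FStar Acts p B) := by
      intro j hj
      exact Finset.mem_filter.2 ⟨Finset.mem_univ j, closed_subset_FStar Acts p B hg hF j hj⟩
    have hle : (1:ℝ) ≤ ∑ j ∈ Finset.univ.filter (· ∈ FStar Acts p B), p i (g i) j := by
      rw [← hF.2 i hiF']
      exact Finset.sum_le_sum_of_subset_of_nonneg hsub
        fun j _ _ => hp0 i (g i) (hg i) j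
    have hge : ∑ j ∈ Finset.univ.filter (· ∈ FStar Acts p B), p i (g i) j ≤ 1 := by
      rw [← hp1 i (g i) (hg i)]
      exact Finset.sum_le_sum_of_subset_of_nonneg (Finset.subset_univ _)
        fun j _ _ => hp0 i (g i) (hg i) j
    linarith

lemma hitProb_zero_on_FStar {g : S → A} (hg : ∀ s, g s ∈ Acts s)
    (hp0 : ∀ i, ∀ a ∈ Acts i, ∀ j, 0 ≤ p i a j)
    (hp1 : ∀ i, ∀ a ∈ Acts i, ∑ j, p i a j = 1)
    (hFg : Fabs p B g = FStar Acts p B) {i : S} (hi : i ∈ FStar Acts p B) :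
    hitProb (fun i j => p i (g i) j) B i = 0 := by
  have hcl := FS_closed Acts p B hg hp0 hp1 hFg
  exact hitProb_eq_zero_of_closed _ B (fun i j => hp0 i (g i) (hg i) j)
    (fun i => hp1 i (g i) (hg i)) _ hcl.1 hcl.2 i
    (Finset.mem_filter.2 ⟨Finset.mem_univ i, hi⟩)

/-- `∑_j p(i,a,j) q_j^g = oneStep` when `q^g` vanishes on `F_*`. -/
lemma sum_mul_hitProb {g : S → A} (hg : ∀ s, g s ∈ Acts s)
    (hp0 : ∀ i, ∀ a ∈ Acts i, ∀ j, 0 ≤ p i a j)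
    (hp1 : ∀ i, ∀ a ∈ Acts i, ∑ j, p i a j = 1)
    (hFg : Fabs p B g = FStar Acts p B) (i : S) (a : A) :
    ∑ j, p i a j * hitProb (fun i j => p i (g i) j) B j = oneStep Acts p B g i a := by
  rw [sum_decomp Acts p B, oneStep]
  have h1 : ∑ j ∈ B, p i a j * hitProb (fun i j => p i (g i) j) B j = ∑ j ∈ B, p i a j :=
    Finset.sum_congr rfl fun j hj => by rw [hitProb_mem _ B hj, mul_one]
  have h2 : ∑ j ∈ Finset.univ.filter (· ∈ FStar Acts p B),
      p i a j * hitProb (fun i j => p i (g i) j) B j = 0 :=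
    Finset.sum_eq_zero fun j hj => by
      rw [hitProb_zero_on_FStar Acts p B hg hp0 hp1 hFg (Finset.mem_filter.1 hj).2, mul_zero]
  rw [h1, h2, add_zero]

/-- Policy evaluation: `q_i^g = oneStep(i, g i)` off `B`. -/
lemma eval_oneStep {g : S → A} (hg : ∀ s, g s ∈ Acts s)
    (hp0 : ∀ i, ∀ a ∈ Acts i, ∀ j, 0 ≤ p i a j)
    (hp1 : ∀ i, ∀ a ∈ Acts i, ∑ j, p i a j = 1)
    (hFg : Fabs p B g = FStar Acts p B) {i : S} (hi : i ∉ B) :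
    hitProb (fun i j => p i (g i) j) B i = oneStep Acts p B g i (g i) := by
  rw [hitProb_rec (fun i j => p i (g i) j) B (fun i j => hp0 i (g i) (hg i) j)
    (fun i => hp1 i (g i) (hg i)) hi]
  exact sum_mul_hitProb Acts p B hg hp0 hp1 hFg i (g i)

end Structural

section Safety

lemma tendsto_finset_sup' {ι : Type*} (s : Finset ι) (hs : s.Nonempty)
    (f : ℕ → ι → ℝ) (g : ι → ℝ)
    (hf : ∀ a ∈ s, Filter.Tendsto (fun n => f n a) Filter.atTop (nhds (g a))) :
    Filter.Tendsto (fun n => s.sup' hs (f n)) Filter.atTop (nhds (s.sup' hs g)) := by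
  revert hf
  induction hs using Finset.Nonempty.cons_induction with
  | singleton a => intro hf; simpa using hf a (by simp)
  | cons a s ha hs ih =>
    intro hf
    simp only [Finset.sup'_cons hs]
    exact (hf a (by simp)).max (ih fun b hb => hf b (Finset.mem_cons_of_mem hb))

variable [Fintype S] [Fintype A] [DecidableEq S]
  (Acts : S → Finset A) (hA : ∀ i, (Acts i).Nonempty) (p : S → A → S → ℝ) (B : Finset S)

/-- Safety value iteration: `safeV n i` is the optimal probability of avoiding `B`
for `n` steps from `i`. -/
noncomputable def safeV : ℕ → S → ℝ
  | 0, i => if i ∈ B then 0 else 1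
  | n + 1, i =>
      if i ∈ B then 0 else (Acts i).sup' (hA i) fun a => ∑ j, p i a j * safeV n j

variable (hp0 : ∀ i, ∀ a ∈ Acts i, ∀ j, 0 ≤ p i a j)
  (hp1 : ∀ i, ∀ a ∈ Acts i, ∑ j, p i a j = 1)

include hp0 in
lemma safeV_nonneg : ∀ n i, 0 ≤ safeV Acts hA p B n i := by
  intro n
  induction n with
  | zero => intro i; simp only [safeV]; split <;> norm_num
  | succ n ih =>
    intro i
    show (0:ℝ) ≤ if i ∈ B then 0 else (Acts i).sup' (hA i) fun a => ∑ j, p i a j * safeV Acts hA p B n j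
    split
    · norm_num
    · obtain ⟨a, ha⟩ := hA i
      refine le_trans ?_
        (Finset.le_sup' (fun a => ∑ j, p i a j * safeV Acts hA p B n j) ha)
      exact Finset.sum_nonneg fun j _ => mul_nonneg (hp0 i a ha j) (ih j)

include hp0 hp1 in
lemma safeV_le_one : ∀ n i, safeV Acts hA p B n i ≤ 1 := by
  intro n
  induction n with
  | zero => intro i; simp only [safeV]; split <;> norm_num
  | succ n ih =>
    intro i
    show (if i ∈ B then 0 else (Acts i).sup' (hA i) fun a => ∑ j, p i a j * safeV Acts hA p B n j) ≤ 1
    split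
    · norm_num
    · refine Finset.sup'_le _ _ fun a ha => ?_
      calc ∑ j, p i a j * safeV Acts hA p B n j ≤ ∑ j, p i a j * 1 :=
            Finset.sum_le_sum fun j _ => mul_le_mul_of_nonneg_left (ih j) (hp0 i a ha j)
        _ = 1 := by simp [hp1 i a ha]

lemma safeV_mem_B : ∀ n, ∀ i ∈ B, safeV Acts hA p B n i = 0 := by
  intro n i hi; cases n <;> simp [safeV, hi]

include hp0 hp1 in
lemma safeV_antitone_succ : ∀ n i, safeV Acts hA p B (n + 1) i ≤ safeV Acts hA p B n i := by
  intro n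
  induction n with
  | zero =>
    intro i
    show (if i ∈ B then 0 else (Acts i).sup' (hA i) fun a => ∑ j, p i a j * safeV Acts hA p B 0 j)
      ≤ safeV Acts hA p B 0 i
    have h0 : safeV Acts hA p B 0 i = if i ∈ B then 0 else 1 := rfl
    rw [h0]
    split
    · norm_num
    · refine Finset.sup'_le _ _ fun a ha => ?_
      calc ∑ j, p i a j * safeV Acts hA p B 0 j ≤ ∑ j, p i a j * 1 :=
            Finset.sum_le_sum fun j _ => mul_le_mul_of_nonneg_left
              (safeV_le_one Acts hA p B hp0 hp1 0 j) (hp0 i a ha j)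
        _ = 1 := by simp [hp1 i a ha]
  | succ n ih =>
    intro i
    show (if i ∈ B then 0 else (Acts i).sup' (hA i) fun a => ∑ j, p i a j * safeV Acts hA p B (n+1) j)
      ≤ (if i ∈ B then 0 else (Acts i).sup' (hA i) fun a => ∑ j, p i a j * safeV Acts hA p B n j)
    split
    · norm_num
    · refine Finset.sup'_le _ _ fun a ha => ?_
      refine le_trans (Finset.sum_le_sum fun j _ =>
        mul_le_mul_of_nonneg_left (ih j) (hp0 i a ha j))
        (Finset.le_sup' (fun a => ∑ j, p i a j * safeV Acts hA p B n j) ha)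

include hp0 hp1 in
lemma safeV_antitone (i : S) : Antitone fun n => safeV Acts hA p B n i :=
  antitone_nat_of_succ_le fun n => safeV_antitone_succ Acts hA p B hp0 hp1 n i

/-- The limit of the safety iteration. -/
noncomputable def safeVinf (i : S) : ℝ := ⨅ n, safeV Acts hA p B n i

include hp0 in
lemma safeV_bddBelow (i : S) : BddBelow (Set.range fun n => safeV Acts hA p B n i) := by
  refine ⟨0, ?_⟩; rintro x ⟨n, rfl⟩; exact safeV_nonneg Acts hA p B hp0 n i

include hp0 hp1 in
lemma safeVinf_tendsto (i : S) :
    Filter.Tendsto (fun n => safeV Acts hA p B n i) Filter.atTop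
      (nhds (safeVinf Acts hA p B i)) :=
  tendsto_atTop_ciInf (safeV_antitone Acts hA p B hp0 hp1 i) (safeV_bddBelow Acts hA p B hp0 i)

include hp0 in
lemma safeVinf_le (n : ℕ) (i : S) : safeVinf Acts hA p B i ≤ safeV Acts hA p B n i :=
  ciInf_le (safeV_bddBelow Acts hA p B hp0 i) n

include hp0 hp1 in
lemma safeVinf_le_one (i : S) : safeVinf Acts hA p B i ≤ 1 :=
  le_trans (safeVinf_le Acts hA p B hp0 0 i) (safeV_le_one Acts hA p B hp0 hp1 0 i)

include hp0 hp1 in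
lemma safeVinf_fixed (i : S) :
    safeVinf Acts hA p B i
      = if i ∈ B then 0 else (Acts i).sup' (hA i) fun a => ∑ j, p i a j * safeVinf Acts hA p B j := by
  have h1 : Filter.Tendsto (fun n => safeV Acts hA p B (n + 1) i) Filter.atTop
      (nhds (safeVinf Acts hA p B i)) :=
    (safeVinf_tendsto Acts hA p B hp0 hp1 i).comp (Filter.tendsto_add_atTop_nat 1)
  have h2 : Filter.Tendsto (fun n => safeV Acts hA p B (n + 1) i) Filter.atTop
      (nhds (if i ∈ B then 0 else (Acts i).sup' (hA i) fun a =>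
        ∑ j, p i a j * safeVinf Acts hA p B j)) := by
    by_cases hi : i ∈ B
    · have : (fun n => safeV Acts hA p B (n + 1) i) = fun _ => (0:ℝ) := by
        funext n
        show (if i ∈ B then 0 else (Acts i).sup' (hA i) fun a => ∑ j, p i a j * safeV Acts hA p B n j) = 0
        rw [if_pos hi]
      rw [this, if_pos hi]; exact tendsto_const_nhds
    · have : (fun n => safeV Acts hA p B (n + 1) i)
          = fun n => (Acts i).sup' (hA i) fun a => ∑ j, p i a j * safeV Acts hA p B n j := by
        funext n
        show (if i ∈ B then 0 else (Acts i).sup' (hA i) fun a => ∑ j, p i a j * safeV Acts hA p B n j) = _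
        rw [if_neg hi]
      rw [this, if_neg hi]
      exact tendsto_finset_sup' _ _ _ _ fun a _ =>
        tendsto_finset_sum _ fun j _ =>
          Filter.Tendsto.const_mul (p i a j) (safeVinf_tendsto Acts hA p B hp0 hp1 j)
  exact tendsto_nhds_unique h1 h2

lemma safeVinf_mem_B {i : S} (hi : i ∈ B) : safeVinf Acts hA p B i = 0 := by
  have : (fun n => safeV Acts hA p B n i) = fun _ => (0:ℝ) :=
    funext fun n => safeV_mem_B Acts hA p B n i hi
  rw [safeVinf, this, ciInf_const]

end Safety

section SafetyLimit

variable [Fintype S] [Fintype A] [DecidableEq S]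
  (Acts : S → Finset A) (hA : ∀ i, (Acts i).Nonempty) (p : S → A → S → ℝ) (B : Finset S)
  (hp0 : ∀ i, ∀ a ∈ Acts i, ∀ j, 0 ≤ p i a j)
  (hp1 : ∀ i, ∀ a ∈ Acts i, ∑ j, p i a j = 1)

include hp0 hp1 in
/-- On `G_*` the limiting safety value is strictly below `1`. -/
lemma safeVinf_lt_one : ∀ i ∈ GStar Acts p B, safeVinf Acts hA p B i < 1 := by
  intro i hiG
  rcases lt_or_ge (safeVinf Acts hA p B i) 1 with h | h
  · exact h
  exfalso
  have hval : safeVinf Acts hA p B i = 1 :=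
    le_antisymm (safeVinf_le_one Acts hA p B hp0 hp1 i) h
  -- the set of states with limiting safety value 1
  set D : Finset S := Finset.univ.filter (fun j => safeVinf Acts hA p B j = 1) with hD
  have hDB : ∀ j ∈ D, j ∉ B := by
    intro j hj hjB
    have h0 : safeVinf Acts hA p B j = 0 := safeVinf_mem_B Acts hA p B hjB
    have h1 : safeVinf Acts hA p B j = 1 := (Finset.mem_filter.1 hj).2
    rw [h0] at h1; norm_num at h1
  have hclosed : ∀ j ∈ D, ∃ a ∈ Acts j, ∑ k ∈ D, p j a k = 1 := by
    intro j hj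
    have hj1 : safeVinf Acts hA p B j = 1 := (Finset.mem_filter.1 hj).2
    have hfix := safeVinf_fixed Acts hA p B hp0 hp1 j
    rw [if_neg (hDB j hj), hj1] at hfix
    obtain ⟨a, haA, hae⟩ := Finset.exists_mem_eq_sup' (hA j)
      (fun a => ∑ k, p j a k * safeVinf Acts hA p B k)
    rw [hae] at hfix
    refine ⟨a, haA, ?_⟩
    have hz : ∑ k, p j a k * (1 - safeVinf Acts hA p B k) = 0 := by
      have := hp1 j a haA
      simp only [mul_sub, Finset.sum_sub_distrib, mul_one]
      rw [this, ← hfix]; ring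
    have hterm : ∀ k ∈ Finset.univ, p j a k * (1 - safeVinf Acts hA p B k) = 0 := by
      rw [← Finset.sum_eq_zero_iff_of_nonneg]
      · exact hz
      · intro k _
        exact mul_nonneg (hp0 j a haA k)
          (by linarith [safeVinf_le_one Acts hA p B hp0 hp1 k])
    have hsupp : ∀ k, k ∉ D → p j a k = 0 := by
      intro k hk
      have hk1 : safeVinf Acts hA p B k ≠ 1 := by
        intro hc; exact hk (Finset.mem_filter.2 ⟨Finset.mem_univ k, hc⟩)
      have := hterm k (Finset.mem_univ k)
      rcases mul_eq_zero.1 this with h' | h'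
      · exact h'
      · exact absurd (by linarith : safeVinf Acts hA p B k = 1) hk1
    rw [Finset.sum_subset (Finset.subset_univ D) (fun k _ hk => hsupp k hk)]
    exact hp1 j a haA
  -- build a stationary policy witnessing `D ⊆ F_*`
  set g : S → A := fun j =>
    if h : ∃ a ∈ Acts j, ∑ k ∈ D, p j a k = 1 then h.choose else (hA j).choose with hg
  have hgA : ∀ s, g s ∈ Acts s := by
    intro s
    rw [hg]; dsimp only
    split
    · exact (‹∃ a ∈ Acts s, ∑ k ∈ D, p s a k = 1›).choose_spec.1
    · exact (hA s).choose_spec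
  have hgD : ∀ j ∈ D, ∑ k ∈ D, p j (g j) k = 1 := by
    intro j hj
    have hex := hclosed j hj
    rw [hg]; dsimp only
    rw [dif_pos hex]
    exact hex.choose_spec.2
  have hDF : IsBcClosed p B g D := ⟨hDB, hgD⟩
  have hiD : i ∈ D := Finset.mem_filter.2 ⟨Finset.mem_univ i, hval⟩
  have : i ∈ FStar Acts p B := ⟨g, hgA, D, hDF, hiD⟩
  exact ((mem_GStar Acts p B).1 hiG).2 this

include hp0 hp1 in
lemma exists_eps_m (hG : (GStar Acts p B).Nonempty) :
    ∃ ε : ℝ, 0 < ε ∧ ∃ m : ℕ, 1 ≤ m ∧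
      ∀ i ∈ GStar Acts p B, safeV Acts hA p B m i ≤ 1 - ε := by
  set ε0 : ℝ := (GStar Acts p B).inf' hG fun i => 1 - safeVinf Acts hA p B i with hε0
  have hε0pos : 0 < ε0 := by
    rw [hε0]
    refine (Finset.lt_inf'_iff hG).2 fun i hi => ?_
    linarith [safeVinf_lt_one Acts hA p B hp0 hp1 i hi]
  have hex : ∀ i ∈ GStar Acts p B, ∃ n, safeV Acts hA p B n i < 1 - ε0 / 2 := by
    intro i hi
    have h1 : safeVinf Acts hA p B i < 1 - ε0 / 2 := by
      have : ε0 ≤ 1 - safeVinf Acts hA p B i :=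
        Finset.inf'_le (fun i => 1 - safeVinf Acts hA p B i) hi
      linarith
    obtain ⟨x, ⟨n, rfl⟩, hx⟩ := exists_lt_of_csInf_lt (Set.range_nonempty _) h1
    exact ⟨n, hx⟩
  set M : S → ℕ := fun i =>
    if h : ∃ n, safeV Acts hA p B n i < 1 - ε0 / 2 then h.choose else 0 with hM
  refine ⟨ε0 / 2, by linarith, Finset.univ.sup M + 1, le_add_self, fun i hi => ?_⟩
  have hMi : safeV Acts hA p B (M i) i < 1 - ε0 / 2 := by
    have hex' := hex i hi
    rw [hM]; dsimp only
    rw [dif_pos hex']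
    exact hex'.choose_spec
  have hle : M i ≤ Finset.univ.sup M + 1 :=
    le_trans (Finset.le_sup (Finset.mem_univ i)) (Nat.le_succ _)
  have := safeV_antitone Acts hA p B hp0 hp1 i hle
  linarith
end SafetyLimit

section LowerBound

variable [Fintype S] [Fintype A] [DecidableEq S]
  (Acts : S → Finset A) (hA : ∀ i, (Acts i).Nonempty) (p : S → A → S → ℝ) (B : Finset S)

/-- `Yfun π n h i = P^π(avoid B up to time n, X_n ∈ G_*)`. -/
noncomputable def Yfun (π : List (S × A) → S → A → ℝ) : ℕ → List (S × A) → S → ℝ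
  | 0, _, i => if i ∈ GStar Acts p B then 1 else 0
  | n + 1, h, i =>
      if i ∈ B then 0
      else ∑ a, π h i a * ∑ j, p i a j * Yfun π n (h ++ [(i, a)]) j

variable (hp0 : ∀ i, ∀ a ∈ Acts i, ∀ j, 0 ≤ p i a j)
  (hp1 : ∀ i, ∀ a ∈ Acts i, ∑ j, p i a j = 1)
  {π : List (S × A) → S → A → ℝ}

include hp0 in
lemma Yfun_nonneg (hπ : IsPolicy Acts π) : ∀ n h i, 0 ≤ Yfun Acts p B π n h i := by
  intro n
  induction n with
  | zero => intro h i; simp only [Yfun]; split <;> norm_num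
  | succ n ih =>
    intro h i; simp only [Yfun]; split
    · norm_num
    · refine Finset.sum_nonneg fun a _ => ?_
      by_cases ha : a ∈ Acts i
      · exact mul_nonneg ((hπ h i).1 a) (Finset.sum_nonneg fun j _ =>
          mul_nonneg (hp0 i a ha j) (ih (h ++ [(i, a)]) j))
      · rw [(hπ h i).2.2 a ha, zero_mul]

include hp0 hp1 in
/-- DP upper bound: survival probability is at most the safety value. -/
lemma surv_le_safeV (hπ : IsPolicy Acts π) :
    ∀ n h i, 1 - failLe p B π n h i ≤ safeV Acts hA p B n i := by
  intro n
  induction n with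
  | zero =>
    intro h i
    show 1 - failLe p B π 0 h i ≤ if i ∈ B then 0 else 1
    simp only [failLe]; split <;> norm_num
  | succ n ih =>
    intro h i
    show 1 - failLe p B π (n+1) h i
      ≤ if i ∈ B then 0 else (Acts i).sup' (hA i) fun a => ∑ j, p i a j * safeV Acts hA p B n j
    simp only [failLe]
    split
    · norm_num
    · rename_i hi
      rw [sum_pi_one Acts hπ]
      have key : ∀ a ∈ Acts i,
          π h i a * (1 - ∑ j, p i a j * failLe p B π n (h ++ [(i, a)]) j)
            ≤ π h i a * ((Acts i).sup' (hA i) fun a => ∑ j, p i a j * safeV Acts hA p B n j) := by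
        intro a ha
        refine mul_le_mul_of_nonneg_left ?_ ((hπ h i).1 a)
        refine le_trans ?_ (Finset.le_sup' (fun a => ∑ j, p i a j * safeV Acts hA p B n j) ha)
        have h1 : (1:ℝ) - ∑ j, p i a j * failLe p B π n (h ++ [(i, a)]) j
            = ∑ j, p i a j * (1 - failLe p B π n (h ++ [(i, a)]) j) := by
          simp only [mul_sub, Finset.sum_sub_distrib, mul_one, hp1 i a ha]
        rw [h1]
        exact Finset.sum_le_sum fun j _ =>
          mul_le_mul_of_nonneg_left (ih (h ++ [(i, a)]) j) (hp0 i a ha j)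
      calc 1 - ∑ a ∈ Acts i, π h i a * ∑ j, p i a j * failLe p B π n (h ++ [(i, a)]) j
          = ∑ a ∈ Acts i, π h i a * (1 - ∑ j, p i a j * failLe p B π n (h ++ [(i, a)]) j) := by
            simp only [mul_sub, Finset.sum_sub_distrib, mul_one, (hπ h i).2.1]
        _ ≤ ∑ a ∈ Acts i, π h i a *
              ((Acts i).sup' (hA i) fun a => ∑ j, p i a j * safeV Acts hA p B n j) :=
            Finset.sum_le_sum key
        _ = (Acts i).sup' (hA i) fun a => ∑ j, p i a j * safeV Acts hA p B n j := by
            rw [← Finset.sum_mul, (hπ h i).2.1, one_mul]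

include hp0 in
/-- Key inequality K1: a subsolution vanishing on `F_*` is bounded by
`failLe + Yfun` at every horizon. -/
lemma subsol_le_fail_add_Y (hπ : IsPolicy Acts π) (q : S → ℝ)
    (hq0 : ∀ i, 0 ≤ q i) (hq1 : ∀ i, q i ≤ 1)
    (hqF : ∀ i, i ∉ B → i ∉ GStar Acts p B → q i = 0)
    (hsub : ∀ i, i ∉ B → ∀ a ∈ Acts i, q i ≤ ∑ j, p i a j * q j) :
    ∀ n h i, q i ≤ failLe p B π n h i + Yfun Acts p B π n h i := by
  intro n
  induction n with
  | zero =>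
    intro h i
    simp only [failLe, Yfun]
    by_cases hi : i ∈ B
    · rw [if_pos hi]
      have := Yfun_nonneg Acts p B hp0 hπ 0 h i
      simp only [Yfun] at this
      have h1 := hq1 i
      split <;> linarith
    · rw [if_neg hi]
      by_cases hiG : i ∈ GStar Acts p B
      · rw [if_pos hiG]; linarith [hq1 i]
      · rw [if_neg hiG, hqF i hi hiG]; norm_num
  | succ n ih =>
    intro h i
    simp only [failLe, Yfun]
    by_cases hi : i ∈ B
    · rw [if_pos hi, if_pos hi]
      have := Yfun_nonneg Acts p B hp0 hπ (n+1) h i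
      simp only [Yfun, if_pos hi] at this
      linarith [hq1 i]
    · rw [if_neg hi, if_neg hi]
      have hcomb : ∑ a, π h i a * (∑ j, p i a j * failLe p B π n (h ++ [(i, a)]) j)
            + ∑ a, π h i a * (∑ j, p i a j * Yfun Acts p B π n (h ++ [(i, a)]) j)
          = ∑ a ∈ Acts i, π h i a *
              ∑ j, p i a j * (failLe p B π n (h ++ [(i, a)]) j
                + Yfun Acts p B π n (h ++ [(i, a)]) j) := by
        rw [sum_pi_one Acts hπ, sum_pi_one Acts hπ, ← Finset.sum_add_distrib]
        refine Finset.sum_congr rfl fun a _ => ?_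
        rw [← mul_add, ← Finset.sum_add_distrib]
        congr 1; congr 1
        exact funext fun j => by ring
      rw [hcomb]
      calc q i = (∑ a ∈ Acts i, π h i a) * q i := by rw [(hπ h i).2.1, one_mul]
        _ = ∑ a ∈ Acts i, π h i a * q i := by rw [Finset.sum_mul]
        _ ≤ ∑ a ∈ Acts i, π h i a *
              ∑ j, p i a j * (failLe p B π n (h ++ [(i, a)]) j
                + Yfun Acts p B π n (h ++ [(i, a)]) j) := by
            refine Finset.sum_le_sum fun a ha => mul_le_mul_of_nonneg_left ?_ ((hπ h i).1 a)
            refine le_trans (hsub i hi a ha) ?_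
            exact Finset.sum_le_sum fun j _ =>
              mul_le_mul_of_nonneg_left (ih (h ++ [(i, a)]) j) (hp0 i a ha j)

include hp0 hp1 in
/-- Key inequality K4: each visit to `G_*` forces extra failure mass within `m` steps. -/
lemma window_decay (hπ : IsPolicy Acts π) (ε : ℝ) (hε : 0 ≤ ε) (m : ℕ)
    (hwin : ∀ h i, i ∈ GStar Acts p B → ε ≤ failLe p B π m h i) :
    ∀ n h i, failLe p B π n h i + ε * Yfun Acts p B π n h i ≤ failLe p B π (n + m) h i := by
  intro n
  induction n with
  | zero =>
    intro h i
    simp only [failLe, Yfun, Nat.zero_add]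
    by_cases hi : i ∈ B
    · rw [if_pos hi, if_neg (fun hG => ((mem_GStar Acts p B).1 hG).1 hi),
        failLe_mem p B m h hi]
      norm_num
    · rw [if_neg hi]
      by_cases hiG : i ∈ GStar Acts p B
      · rw [if_pos hiG]
        have := hwin h i hiG
        linarith
      · rw [if_neg hiG]
        have := failLe_nonneg Acts p B hp0 hπ m h i
        linarith
  | succ n ih =>
    intro h i
    have hidx : n + 1 + m = (n + m) + 1 := by omega
    rw [hidx]
    simp only [failLe, Yfun]
    by_cases hi : i ∈ B
    · rw [if_pos hi, if_pos hi, if_pos hi]; norm_num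
    · rw [if_neg hi, if_neg hi, if_neg hi]
      have hcomb : ∑ a, π h i a * (∑ j, p i a j * failLe p B π n (h ++ [(i, a)]) j)
            + ε * ∑ a, π h i a * (∑ j, p i a j * Yfun Acts p B π n (h ++ [(i, a)]) j)
          = ∑ a ∈ Acts i, π h i a *
              ∑ j, p i a j * (failLe p B π n (h ++ [(i, a)]) j
                + ε * Yfun Acts p B π n (h ++ [(i, a)]) j) := by
        rw [sum_pi_one Acts hπ, sum_pi_one Acts hπ, Finset.mul_sum, ← Finset.sum_add_distrib]
        refine Finset.sum_congr rfl fun a _ => ?_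
        have hj : ∑ j, p i a j * (failLe p B π n (h ++ [(i, a)]) j
              + ε * Yfun Acts p B π n (h ++ [(i, a)]) j)
            = (∑ j, p i a j * failLe p B π n (h ++ [(i, a)]) j)
              + ε * ∑ j, p i a j * Yfun Acts p B π n (h ++ [(i, a)]) j := by
          rw [Finset.mul_sum, ← Finset.sum_add_distrib]
          exact Finset.sum_congr rfl fun j _ => by ring
        rw [hj]; ring
      rw [hcomb, sum_pi_one Acts hπ]
      refine Finset.sum_le_sum fun a ha => mul_le_mul_of_nonneg_left ?_ ((hπ h i).1 a)
      exact Finset.sum_le_sum fun j _ =>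
        mul_le_mul_of_nonneg_left (ih (h ++ [(i, a)]) j) (hp0 i a ha j)

include hp0 hp1 in
/-- The central optimality lower bound: any fixed-point subsolution `q` is dominated
by the failure probability of every policy. -/
lemma subsol_le_failProb (hA : ∀ i, (Acts i).Nonempty) (hG : (GStar Acts p B).Nonempty)
    (hπ : IsPolicy Acts π) (q : S → ℝ)
    (hq0 : ∀ i, 0 ≤ q i) (hq1 : ∀ i, q i ≤ 1)
    (hqF : ∀ i, i ∉ B → i ∉ GStar Acts p B → q i = 0)
    (hsub : ∀ i, i ∉ B → ∀ a ∈ Acts i, q i ≤ ∑ j, p i a j * q j) (i : S) :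
    q i ≤ failProb p B π i := by
  by_contra hcon
  push_neg at hcon
  set c : ℝ := q i - failProb p B π i with hc
  have hcpos : 0 < c := by rw [hc]; linarith
  obtain ⟨ε, hεpos, m, hm1, hwin⟩ := exists_eps_m Acts hA p B hp0 hp1 hG
  -- the window bound for failLe
  have hwin' : ∀ h' i', i' ∈ GStar Acts p B → ε ≤ failLe p B π m h' i' := by
    intro h' i' hi'
    have h1 := surv_le_safeV Acts hA p B hp0 hp1 hπ m h' i'
    have h2 := hwin i' hi'
    linarith
  -- each `Yfun n [] i` is at least `c`
  have hY : ∀ n, c ≤ Yfun Acts p B π n [] i := by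
    intro n
    have h1 := subsol_le_fail_add_Y Acts p B hp0 hπ q hq0 hq1 hqF hsub n [] i
    have h2 := failLe_le_failProb Acts p B hp0 hp1 hπ n i
    rw [hc]; linarith
  -- iterate the window decay
  have hiter : ∀ k : ℕ, (k : ℝ) * (ε * c) ≤ failLe p B π (k * m) [] i := by
    intro k
    induction k with
    | zero => simpa using failLe_nonneg Acts p B hp0 hπ 0 [] i
    | succ k ih =>
      have h1 := window_decay Acts p B hp0 hp1 hπ ε (le_of_lt hεpos) m hwin' (k * m) [] i
      have h2 : ε * Yfun Acts p B π (k * m) [] i ≥ ε * c :=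
        mul_le_mul_of_nonneg_left (hY (k * m)) (le_of_lt hεpos)
      have hidx : (k + 1) * m = k * m + m := by ring
      rw [hidx]
      push_cast
      linarith
  obtain ⟨k, hk⟩ := exists_nat_gt (1 / (ε * c))
  have hεc : 0 < ε * c := mul_pos hεpos hcpos
  have h1 : (1:ℝ) < k * (ε * c) := by
    rw [div_lt_iff₀ hεc] at hk; linarith
  have h2 := failLe_le_one Acts p B hp0 hp1 hπ (k * m) [] i
  have := hiter k
  linarith

end LowerBound

theorem stmt16 [Fintype S] [Fintype A] [DecidableEq S]
    (Acts : S → Finset A) (hA : ∀ i, (Acts i).Nonempty)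
    (p : S → A → S → ℝ) (B : Finset S)
    (hp0 : ∀ i, ∀ a ∈ Acts i, ∀ j, 0 ≤ p i a j)
    (hp1 : ∀ i, ∀ a ∈ Acts i, ∑ j, p i a j = 1)
    (hF : (FStar Acts p B).Nonempty) (hG : (GStar Acts p B).Nonempty)
    (hAS : ∀ i, (AStar Acts p B i).Nonempty)
    (gseq : ℕ → S → A)
    (hg0 : ∀ i, gseq 0 i ∈ AStar Acts p B i)
    (hFg0 : Fabs p B (gseq 0) = FStar Acts p B)
    (hstep : ∀ n, ImproveStep Acts p B (gseq n) (gseq (n + 1))) :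
    ∃ N : ℕ, gseq (N + 1) = gseq N ∧
      (∀ i ∈ GStar Acts p B,
        (∑ j ∈ B, p i (gseq N i) j)
            + ∑ j ∈ GStar Acts p B,
                p i (gseq N i) j * hitProb (fun i j => p i (gseq N i) j) B j
          = (AStar Acts p B i).inf' (hAS i) fun a =>
              (∑ j ∈ B, p i a j)
                + ∑ j ∈ GStar Acts p B,
                    p i a j * hitProb (fun i j => p i (gseq N i) j) B j)
      ∧
      ∀ i ∈ Bᶜ,
        hitProb (fun i j => p i (gseq N i) j) B i = failStar Acts p B i := by
  classical
  -- admissibility of every iterate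
  have hadm : ∀ n i, gseq n i ∈ Acts i := by
    intro n
    induction n with
    | zero => exact fun i => AStar_subset_Acts Acts p B i (hg0 i)
    | succ n ih =>
      intro i
      by_cases hi : i ∈ GStar Acts p B
      · by_cases hImp : ImpActs Acts p B (gseq n) i = ∅
        · rw [((hstep n).2 i hi).1 hImp]; exact ih i
        · exact AStar_subset_Acts Acts p B i (((hstep n).2 i hi).2 hImp).1
      · rw [(hstep n).1 i hi]; exact ih i
  -- iterates agree with `gseq 0` on `F_*`
  have heqF : ∀ n i, i ∈ FStar Acts p B → gseq n i = gseq 0 i := by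
    intro n
    induction n with
    | zero => exact fun i _ => rfl
    | succ n ih =>
      intro i hi
      rw [(hstep n).1 i (fun hGi => ((mem_GStar Acts p B).1 hGi).2 hi)]
      exact ih i hi
  -- the absorbing set is `F_*` throughout
  have hFabs : ∀ n, Fabs p B (gseq n) = FStar Acts p B := by
    intro n
    apply Set.eq_of_subset_of_subset
    · rintro i ⟨F, hFc, hiF⟩
      exact closed_subset_FStar Acts p B (hadm n) hFc i hiF
    · intro i hi
      have : i ∈ Fabs p B (gseq 0) := by rw [hFg0]; exact hi
      obtain ⟨F, hFc, hiF⟩ := this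
      refine ⟨F, ⟨hFc.1, fun j hj => ?_⟩, hiF⟩
      rw [heqF n j (closed_subset_FStar Acts p B (hadm 0) hFc j hj)]
      exact hFc.2 j hj
  set Q : ℕ → S → ℝ := fun n => hitProb (fun i j => p i (gseq n i) j) B with hQdef
  have hQ0 : ∀ n i, 0 ≤ Q n i := fun n i =>
    hitProb_nonneg _ B (fun i j => hp0 i (gseq n i) (hadm n i) j)
      (fun i => hp1 i (gseq n i) (hadm n i)) i
  have hQ1 : ∀ n i, Q n i ≤ 1 := fun n i =>
    hitProb_le_one _ B (fun i j => hp0 i (gseq n i) (hadm n i) j)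
      (fun i => hp1 i (gseq n i) (hadm n i)) i
  -- one improvement step does not increase the value, strictly decreasing somewhere
  -- if the policy changes
  have hsup : ∀ n, ∀ i, i ∉ B →
      ∑ j, p i (gseq (n+1) i) j * Q n j ≤ Q n i := by
    intro n i hi
    by_cases he : gseq (n+1) i = gseq n i
    · rw [he]
      exact le_of_eq (hitProb_rec (fun i j => p i (gseq n i) j) B
        (fun i j => hp0 i (gseq n i) (hadm n i) j)
        (fun i => hp1 i (gseq n i) (hadm n i)) hi).symm
    · have hiG : i ∈ GStar Acts p B := by
        by_contra hiG; exact he ((hstep n).1 i hiG)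
      have hImp : ImpActs Acts p B (gseq n) i ≠ ∅ := by
        intro hImp; exact he (((hstep n).2 i hiG).1 hImp)
      obtain ⟨a₀, ha₀⟩ := Finset.nonempty_of_ne_empty hImp
      rw [ImpActs, Finset.mem_filter] at ha₀
      have hmin := (((hstep n).2 i hiG).2 hImp).2 a₀ ha₀.1
      rw [sum_mul_hitProb Acts p B (hadm n) hp0 hp1 (hFabs n) i (gseq (n+1) i)]
      exact le_of_lt (lt_of_le_of_lt hmin ha₀.2)
  have hsupStrict : ∀ n i, gseq (n+1) i ≠ gseq n i →
      ∑ j, p i (gseq (n+1) i) j * Q n j < Q n i := by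
    intro n i he
    have hiG : i ∈ GStar Acts p B := by
      by_contra hiG; exact he ((hstep n).1 i hiG)
    have hImp : ImpActs Acts p B (gseq n) i ≠ ∅ := by
      intro hImp; exact he (((hstep n).2 i hiG).1 hImp)
    obtain ⟨a₀, ha₀⟩ := Finset.nonempty_of_ne_empty hImp
    rw [ImpActs, Finset.mem_filter] at ha₀
    have hmin := (((hstep n).2 i hiG).2 hImp).2 a₀ ha₀.1
    rw [sum_mul_hitProb Acts p B (hadm n) hp0 hp1 (hFabs n) i (gseq (n+1) i)]
    exact lt_of_le_of_lt hmin ha₀.2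
  have hdec : ∀ n i, Q (n+1) i ≤ Q n i := by
    intro n
    exact hitProb_le_of_supersol (fun i j => p i (gseq (n+1) i) j) B
      (fun i j => hp0 i (gseq (n+1) i) (hadm (n+1) i) j)
      (Q n) (hQ0 n)
      (fun i hiB => le_of_eq (hitProb_mem _ B hiB).symm)
      (fun i hi => hsup n i hi)
  have hdecStrict : ∀ n, gseq (n+1) ≠ gseq n → Q (n+1) ≠ Q n := by
    intro n hne
    have : ∃ i, gseq (n+1) i ≠ gseq n i := by
      by_contra hc; push_neg at hc; exact hne (funext hc)
    obtain ⟨i, hi⟩ := this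
    have hiG : i ∈ GStar Acts p B := by
      by_contra hiG; exact hi ((hstep n).1 i hiG)
    have hiB : i ∉ B := ((mem_GStar Acts p B).1 hiG).1
    have hlt : Q (n+1) i < Q n i := by
      have h1 : Q (n+1) i = ∑ j, p i (gseq (n+1) i) j * Q (n+1) j :=
        hitProb_rec (fun i j => p i (gseq (n+1) i) j) B
          (fun i j => hp0 i (gseq (n+1) i) (hadm (n+1) i) j)
          (fun i => hp1 i (gseq (n+1) i) (hadm (n+1) i)) hiB
      have h2 : ∑ j, p i (gseq (n+1) i) j * Q (n+1) j
          ≤ ∑ j, p i (gseq (n+1) i) j * Q n j :=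
        Finset.sum_le_sum fun j _ => mul_le_mul_of_nonneg_left (hdec n j)
          (hp0 i (gseq (n+1) i) (hadm (n+1) i) j)
      have h3 := hsupStrict n i hi
      linarith
    intro hc
    rw [hc] at hlt
    exact lt_irrefl _ hlt
  -- termination
  have hterm : ∃ N, gseq (N + 1) = gseq N := by
    by_contra hc
    push_neg at hc
    have hQlt : ∀ n, Q (n+1) < Q n := by
      intro n
      exact lt_of_le_of_ne (fun i => hdec n i) (hdecStrict n (hc n))
    have hSA : StrictAnti Q := strictAnti_nat_of_succ_lt hQlt
    have hinj : Function.Injective Q := hSA.injective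
    have hfin : (Set.range fun g : S → A =>
        hitProb (fun i j => p i (g i) j) B).Finite := Set.finite_range _
    have hsub : Set.range Q ⊆ Set.range fun g : S → A =>
        hitProb (fun i j => p i (g i) j) B := by
      rintro x ⟨n, rfl⟩; exact ⟨gseq n, rfl⟩
    exact (hfin.subset hsub).not_infinite (Set.infinite_range_of_injective hinj)
  obtain ⟨N, hfix⟩ := hterm
  refine ⟨N, hfix, ?_, ?_⟩
  -- no improving actions at the fixed point
  case _ =>
    have hImpEmpty : ∀ i ∈ GStar Acts p B, ImpActs Acts p B (gseq N) i = ∅ := by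
      intro i hiG
      by_contra hImp
      obtain ⟨a₀, ha₀⟩ := Finset.nonempty_of_ne_empty hImp
      rw [ImpActs, Finset.mem_filter] at ha₀
      have hmin := (((hstep N).2 i hiG).2 hImp).2 a₀ ha₀.1
      rw [hfix] at hmin
      have heval := eval_oneStep Acts p B (hadm N) hp0 hp1 (hFabs N)
        ((mem_GStar Acts p B).1 hiG).1
      have : Q N i < Q N i := by
        calc Q N i = oneStep Acts p B (gseq N) i (gseq N i) := heval
          _ ≤ oneStep Acts p B (gseq N) i a₀ := hmin
          _ < Q N i := ha₀.2
      exact lt_irrefl _ this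
    intro i hiG
    have hiB : i ∉ B := ((mem_GStar Acts p B).1 hiG).1
    have heval := eval_oneStep Acts p B (hadm N) hp0 hp1 (hFabs N) hiB
    have hAeq : AStar Acts p B i = Acts i := AStar_eq_Acts Acts p B hiG
    have hge : ∀ a ∈ AStar Acts p B i, Q N i ≤ oneStep Acts p B (gseq N) i a := by
      intro a ha
      have := Finset.filter_eq_empty_iff.1 (hImpEmpty i hiG) ha
      exact le_of_not_gt this
    show oneStep Acts p B (gseq N) i (gseq N i)
      = (AStar Acts p B i).inf' (hAS i) (oneStep Acts p B (gseq N) i)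
    refine le_antisymm ?_ ?_
    · refine Finset.le_inf' _ _ fun a ha => ?_
      rw [← heval]; exact hge a ha
    · refine Finset.inf'_le _ ?_
      rw [hAeq]; exact hadm N i
  -- optimality of the fixed point
  case _ =>
    have hImpEmpty : ∀ i ∈ GStar Acts p B, ImpActs Acts p B (gseq N) i = ∅ := by
      intro i hiG
      by_contra hImp
      obtain ⟨a₀, ha₀⟩ := Finset.nonempty_of_ne_empty hImp
      rw [ImpActs, Finset.mem_filter] at ha₀
      have hmin := (((hstep N).2 i hiG).2 hImp).2 a₀ ha₀.1
      rw [hfix] at hmin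
      have heval := eval_oneStep Acts p B (hadm N) hp0 hp1 (hFabs N)
        ((mem_GStar Acts p B).1 hiG).1
      have : Q N i < Q N i := by
        calc Q N i = oneStep Acts p B (gseq N) i (gseq N i) := heval
          _ ≤ oneStep Acts p B (gseq N) i a₀ := hmin
          _ < Q N i := ha₀.2
      exact lt_irrefl _ this
    intro i _
    -- the subsolution property of `Q N`
    have hsub : ∀ i, i ∉ B → ∀ a ∈ Acts i, Q N i ≤ ∑ j, p i a j * Q N j := by
      intro i hiB a ha
      by_cases hiG : i ∈ GStar Acts p B
      · have hge : Q N i ≤ oneStep Acts p B (gseq N) i a := by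
          have haA : a ∈ AStar Acts p B i := by
            rw [AStar_eq_Acts Acts p B hiG]; exact ha
          exact le_of_not_gt (Finset.filter_eq_empty_iff.1 (hImpEmpty i hiG) haA)
        rw [sum_mul_hitProb Acts p B (hadm N) hp0 hp1 (hFabs N) i a]
        exact hge
      · have hiF : i ∈ FStar Acts p B := by
          by_contra hiF
          exact hiG ((mem_GStar Acts p B).2 ⟨hiB, hiF⟩)
        have hz : Q N i = 0 :=
          hitProb_zero_on_FStar Acts p B (hadm N) hp0 hp1 (hFabs N) hiF
        rw [hz]
        exact Finset.sum_nonneg fun j _ => mul_nonneg (hp0 i a ha j) (hQ0 N j)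
    have hqF : ∀ i, i ∉ B → i ∉ GStar Acts p B → Q N i = 0 := by
      intro i hiB hiG
      have hiF : i ∈ FStar Acts p B := by
        by_contra hiF
        exact hiG ((mem_GStar Acts p B).2 ⟨hiB, hiF⟩)
      exact hitProb_zero_on_FStar Acts p B (hadm N) hp0 hp1 (hFabs N) hiF
    have hSetNe : {x | ∃ π, IsPolicy Acts π ∧ x = failProb p B π i}.Nonempty :=
      ⟨failProb p B (detPol (gseq N)) i, detPol (gseq N),
        detPol_isPolicy Acts (hadm N), rfl⟩
    have hBdd : BddBelow {x | ∃ π, IsPolicy Acts π ∧ x = failProb p B π i} := by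
      refine ⟨0, ?_⟩
      rintro x ⟨π, hπ, rfl⟩
      exact failProb_nonneg Acts p B hp0 hp1 hπ i
    refine le_antisymm ?_ ?_
    · refine le_csInf hSetNe ?_
      rintro x ⟨π, hπ, rfl⟩
      exact subsol_le_failProb Acts p B hp0 hp1 hA hG hπ (Q N) (hQ0 N) (hQ1 N) hqF hsub i
    · have hmem : hitProb (fun i j => p i (gseq N i) j) B i
          ∈ {x | ∃ π, IsPolicy Acts π ∧ x = failProb p B π i} :=
        ⟨detPol (gseq N), detPol_isPolicy Acts (hadm N),
          (failProb_detPol p B (gseq N) i).symm⟩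
      exact csInf_le hBdd hmem
end

section
/- If two stationary policies g, g̃ satisfy q_i^g ≥ p(B|i,g̃(i)) + Σ_{j∈Bᶜ} p(j|i,g̃(i)) q_j^g for all i ∈ Bᶜ, then q_i^{g̃} ≤ q_i^g for all i ∈ Bᶜ. (One-step dominance of hitting probabilities is preserved in the limit.) -/
open Finset

variable {S A : Type*}

lemma hitLe_nonneg_s17 [Fintype S] [DecidableEq S] (q : S → S → ℝ) (B : Finset S)
    (h0 : ∀ i j, 0 ≤ q i j) : ∀ n i, 0 ≤ hitLe q B n i
  | 0, i => by unfold hitLe; split <;> norm_num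
  | n + 1, i => by
      unfold hitLe; split
      · norm_num
      · exact Finset.sum_nonneg fun j _ => mul_nonneg (h0 i j) (hitLe_nonneg_s17 q B h0 n j)

lemma hitLe_le_one_s17 [Fintype S] [DecidableEq S] (q : S → S → ℝ) (B : Finset S)
    (h0 : ∀ i j, 0 ≤ q i j) (h1 : ∀ i, ∑ j, q i j = 1) : ∀ n i, hitLe q B n i ≤ 1
  | 0, i => by unfold hitLe; split <;> norm_num
  | n + 1, i => by
      unfold hitLe; split
      · norm_num
      · calc ∑ j, q i j * hitLe q B n j ≤ ∑ j, q i j * 1 :=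
              Finset.sum_le_sum fun j _ =>
                mul_le_mul_of_nonneg_left (hitLe_le_one_s17 q B h0 h1 n j) (h0 i j)
          _ = 1 := by simp [h1 i]

lemma hitProb_ge [Fintype S] [DecidableEq S] (q : S → S → ℝ) (B : Finset S)
    (h0 : ∀ i j, 0 ≤ q i j) (h1 : ∀ i, ∑ j, q i j = 1) (n : ℕ) (i : S) :
    hitLe q B n i ≤ hitProb q B i :=
  le_ciSup (f := fun n => hitLe q B n i)
    ⟨1, Set.forall_mem_range.mpr fun m => hitLe_le_one_s17 q B h0 h1 m i⟩ n

theorem stmt17 [Fintype S] [DecidableEq S]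
    (Acts : S → Finset A) (p : S → A → S → ℝ) (g gt : S → A)
    (hg : ∀ i, g i ∈ Acts i) (hgt : ∀ i, gt i ∈ Acts i)
    (B : Finset S) (hB : B.Nonempty)
    (hp0 : ∀ i, ∀ a ∈ Acts i, ∀ j, 0 ≤ p i a j)
    (hp1 : ∀ i, ∀ a ∈ Acts i, ∑ j, p i a j = 1)
    (hdom : ∀ i ∈ Bᶜ,
      (∑ j ∈ B, p i (gt i) j)
          + ∑ j ∈ Bᶜ, p i (gt i) j * hitProb (fun i j => p i (g i) j) B j
        ≤ hitProb (fun i j => p i (g i) j) B i) :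
    ∀ i ∈ Bᶜ,
      hitProb (fun i j => p i (gt i) j) B i
        ≤ hitProb (fun i j => p i (g i) j) B i := by
  set pg : S → S → ℝ := fun i j => p i (g i) j with hpg
  set pt : S → S → ℝ := fun i j => p i (gt i) j with hpt
  have hg0 : ∀ i j, 0 ≤ pg i j := fun i j => hp0 i (g i) (hg i) j
  have hg1 : ∀ i, ∑ j, pg i j = 1 := fun i => hp1 i (g i) (hg i)
  have ht0 : ∀ i j, 0 ≤ pt i j := fun i j => hp0 i (gt i) (hgt i) j
  have ht1 : ∀ i, ∑ j, pt i j = 1 := fun i => hp1 i (gt i) (hgt i)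
  -- hitProb pg = 1 on B
  have hPB : ∀ i ∈ B, (1:ℝ) ≤ hitProb pg B i := by
    intro i hi
    have := hitProb_ge pg B hg0 hg1 0 i
    simpa [hitLe, hi] using this
  have key : ∀ n i, hitLe pt B n i ≤ hitProb pg B i := by
    intro n
    induction n with
    | zero =>
        intro i
        by_cases hi : i ∈ B
        · simpa [hitLe, hi] using hPB i hi
        · have := hitProb_ge pg B hg0 hg1 0 i
          simp only [hitLe, hi, if_false]
          exact le_trans (hitLe_nonneg_s17 pg B hg0 0 i) this
    | succ n ih =>
        intro i
        by_cases hi : i ∈ B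
        · simpa [hitLe, hi] using hPB i hi
        · have hi' : i ∈ Bᶜ := Finset.mem_compl.mpr hi
          have hsplit : ∑ j, pt i j * hitLe pt B n j
              = (∑ j ∈ B, pt i j * hitLe pt B n j)
                + ∑ j ∈ Bᶜ, pt i j * hitLe pt B n j := by
            rw [← Finset.sum_add_sum_compl B]
          have h1 : (∑ j ∈ B, pt i j * hitLe pt B n j) ≤ ∑ j ∈ B, pt i j :=
            Finset.sum_le_sum fun j _ => by
              have := mul_le_mul_of_nonneg_left (hitLe_le_one_s17 pt B ht0 ht1 n j) (ht0 i j)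
              simpa using this
          have h2 : (∑ j ∈ Bᶜ, pt i j * hitLe pt B n j)
              ≤ ∑ j ∈ Bᶜ, pt i j * hitProb pg B j :=
            Finset.sum_le_sum fun j _ => mul_le_mul_of_nonneg_left (ih j) (ht0 i j)
          calc hitLe pt B (n+1) i = ∑ j, pt i j * hitLe pt B n j := by
                simp [hitLe, hi]
            _ ≤ (∑ j ∈ B, pt i j) + ∑ j ∈ Bᶜ, pt i j * hitProb pg B j := by
                rw [hsplit]; exact add_le_add h1 h2
            _ ≤ hitProb pg B i := hdom i hi'
  intro i _
  exact ciSup_le fun n => key n i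
end
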